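/- arXiv:2004.13258 — 2 statements merged into one kernel-verified Lean document; each statement's English description precedes it below -/
import Mathlib

section
/- Let S ⊇ R be a partial n-kummerian extension of an abelian group G of order n. Then S = ∑_{χ ∈ Ĝ} Q_{χ_p}, and this sum is direct if and only if S ⊇ R is a global Galois extension. -/
/-- A unital partial action of a group `G` on a commutative ring `S`.
The unital ideal `S_g` is `S * e g` where `e g` is a central idempotent,
and `act g` is the partial isomorphism `α_g` (extended to all of `S` by
first multiplying by the identity `e g⁻¹` of its domain ideal). -/
structure PartialAction (G : Type*) [Group G] (S : Type*) [CommRing S] where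
  e : G → S
  act : G → S → S
  e_idem : ∀ g, e g * e g = e g
  e_one : e 1 = 1
  act_one : ∀ x, act 1 x = x
  act_add : ∀ g x y, act g (x + y) = act g x + act g y
  act_mul : ∀ g x y, act g (x * y) = act g x * act g y
  act_restrict : ∀ g x, act g (x * e g⁻¹) = act g x
  act_mem : ∀ g x, act g x * e g = act g x
  act_e : ∀ g, act g (e g⁻¹) = e g
  act_inter : ∀ g h, act g (e g⁻¹ * e h) = e g * e (g * h)
  act_comp : ∀ g h x, act g (act h x * e g⁻¹) = act (g * h) (x * e h⁻¹) * e g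
  act_inv : ∀ g x, act g⁻¹ (act g (x * e g⁻¹)) = x * e g⁻¹

namespace PartialAction

variable {G : Type*} [Group G] {S : Type*} [CommRing S] (P : PartialAction G S)

/-- The subring of subinvariants `S^α`. -/
def invariants : Set S := {a | ∀ g : G, P.act g (a * P.e g⁻¹) = a * P.e g}

/-- `S ⊇ R` is a partial Galois extension: `R = S^α` and there is a
partial Galois coordinate system. -/
def IsPartialGalois [Fintype G] [DecidableEq G] (R : Subring S) : Prop :=
  ((R : Set S) = P.invariants) ∧
    ∃ m : ℕ, ∃ x y : Fin m → S, ∀ g : G,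
      (∑ i : Fin m, x i * P.act g (y i * P.e g⁻¹)) = if g = 1 then 1 else 0

/-- A partial 1-cocycle with values in `S`: `f g` is invertible in the
unital ideal `S e g` with inverse `finv g`, and the cocycle identity holds. -/
structure Cocycle where
  f : G → S
  finv : G → S
  f_mem : ∀ g, f g * P.e g = f g
  finv_mem : ∀ g, finv g * P.e g = finv g
  f_mul_finv : ∀ g, f g * finv g = P.e g
  cocycle : ∀ g h, f (g * h) * P.e g = f g * P.act g (f h * P.e g⁻¹)

variable {P}

theorem act_zero (g : G) : P.act g 0 = 0 := by
  have := P.act_add g 0 0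
  simpa using this.symm

/-- The set `Q_f = {a ∈ S : α_g(a 1_{g⁻¹}) = f(g) a for all g}` attached to a map `f : G → S`. -/
def Qset (P : PartialAction G S) (f : G → S) : Set S :=
  {a | ∀ g : G, P.act g (a * P.e g⁻¹) = f g * a}

/-- `Q_f` as an `R`-submodule of `S`, where `R` is a subring of invariants. -/
def Qmod (P : PartialAction G S) (R : Subring S)
    (hR : ∀ r ∈ R, ∀ g : G, P.act g (r * P.e g⁻¹) = r * P.e g)
    (f : G → S) : Submodule R S where
  carrier := Qset P f
  zero_mem' := by
    intro g
    simp [Qset, act_zero]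
  add_mem' := by
    intro a b ha hb g
    have := P.act_add g (a * P.e g⁻¹) (b * P.e g⁻¹)
    rw [Qset] at *
    rw [add_mul, this, ha g, hb g, mul_add]
  smul_mem' := by
    intro c x hx g
    have hc : (c : S) ∈ (R : Set S) := c.2
    have hcx : c • x = (c : S) * x := Subring.smul_def c x
    have hx' : ∀ g : G, P.act g (x * P.e g⁻¹) = f g * x := hx
    rw [hcx]
    have h1 : P.act g ((c : S) * x * P.e g⁻¹) = P.act g ((c : S)) * P.act g x := by
      rw [P.act_restrict, P.act_mul]
    have h2 : P.act g ((c : S)) = (c : S) * P.e g := by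
      rw [← P.act_restrict g (c : S), hR c c.2 g]
    have h3 : P.act g x = f g * x := by
      rw [← P.act_restrict g x]; exact hx' g
    have h4 : (f g * x) * P.e g = f g * x := by
      have := P.act_mem g (x * P.e g⁻¹)
      rw [P.act_restrict, h3] at this
      exact this
    rw [h1, h2, h3]
    have h5 : (c : S) * P.e g * (f g * x) = (c : S) * (f g * x * P.e g) := by ring
    rw [h5, h4]
    ring

end PartialAction

/-!
For a character `χ` put `T_χ a = ∑_g χ(g⁻¹) α_g(a 1_{g⁻¹})` (`PartialAction.twistedTrace`).
As the values of `χ` are invariant, `T_χ a ∈ Q_{χ_p}`. Orthogonality `∑_χ χ(g) = n [g = 1]` for the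
characters with values in `⟨ω⟩` gives the inversion formula `∑_χ χ(h) T_χ a = n α_h(a 1_{h⁻¹})`,
which at `h = 1` writes `a = ∑_χ n⁻¹ T_χ a`.

If the action is global, `T_χ` acts on `Q_{ψ_p}` as multiplication by `∑_g (χ⁻¹ψ)(g) = n [χ = ψ]`,
so the maps `n⁻¹ T_χ` are projections that separate the summands. Conversely, if the sum is direct,
the decomposition `1 = ∑_χ n⁻¹ T_χ 1` must be the trivial one `1 ∈ Q_1`, so `T_χ 1 = n [χ = 1]`, and
the inversion formula at `h` reads `n 1_h = n`.
-/

section Kummer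

variable {S : Type*} [CommRing S] {ω : S} {n : ℕ}

theorem isPrimitiveRoot_of_isUnit_one_sub_pow [Nontrivial S] (hn : 0 < n) (hω : ω ^ n = 1)
    (hkum : ∀ i : ℕ, 1 ≤ i → i ≤ n - 1 → IsUnit (1 - ω ^ i)) : IsPrimitiveRoot ω n :=
  IsPrimitiveRoot.mk_of_lt ω hn hω fun l hl hln hl1 =>
    not_isUnit_zero (M₀ := S) (by simpa [hl1] using hkum l hl (by omega))

-- In a residue field of `S` the image of `ω` is a primitive `n`-th root of unity, so `n ≠ 0` there.
theorem isUnit_natCast_of_isUnit_one_sub_pow (hn : 0 < n) (hω : ω ^ n = 1)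
    (hkum : ∀ i : ℕ, 1 ≤ i → i ≤ n - 1 → IsUnit (1 - ω ^ i)) : IsUnit (n : S) := by
  by_contra hnu
  obtain ⟨m, hm, hnm⟩ := exists_max_ideal_of_mem_nonunits hnu
  let π := Ideal.Quotient.mk m
  have hprim : IsPrimitiveRoot (π ω) n :=
    isPrimitiveRoot_of_isUnit_one_sub_pow hn (by rw [← map_pow, hω, map_one])
      fun i hi hin => by simpa using (hkum i hi hin).map π
  have : NeZero n := ⟨hn.ne'⟩
  have := hprim.neZero'
  exact NeZero.ne ((n : ℕ) : S ⧸ m)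
    (by rw [← map_natCast π]; exact Ideal.Quotient.eq_zero_iff_mem.mpr hnm)

theorem isUnit_one_sub_of_mem_powers (hn : 0 < n) (hω : ω ^ n = 1)
    (hkum : ∀ i : ℕ, 1 ≤ i → i ≤ n - 1 → IsUnit (1 - ω ^ i)) {s : S}
    (hs : s ∈ Submonoid.powers ω) (hs1 : s ≠ 1) : IsUnit (1 - s) := by
  obtain ⟨k, rfl⟩ := hs
  dsimp only at hs1 ⊢
  rw [pow_eq_pow_mod k hω] at hs1 ⊢
  have hk : k % n ≠ 0 := fun h => hs1 (by rw [h, pow_zero])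
  exact hkum _ (by omega) (by have := Nat.mod_lt k hn; omega)

end Kummer

theorem exists_monoidHom_mem_zpowers_apply_ne_one {G M : Type*} [CommGroup G] [Finite G]
    [CommGroup M] {ζ : M} {k : ℕ} [NeZero k] (hζ : IsPrimitiveRoot ζ k)
    (hk : Monoid.exponent G ∣ k) {g : G} (hg : g ≠ 1) :
    ∃ φ : G →* M, (∀ x, φ x ∈ Subgroup.zpowers ζ) ∧ φ g ≠ 1 := by
  let H := Subgroup.zpowers ζ
  have : IsCyclic Hˣ :=
    isCyclic_of_surjective (toUnits : H ≃* Hˣ).toMonoidHom toUnits.surjective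
  have : HasEnoughRootsOfUnity H k :=
    ⟨⟨⟨ζ, Subgroup.mem_zpowers ζ⟩, IsPrimitiveRoot.coe_submonoidClass_iff.mp hζ⟩,
      inferInstance⟩
  have := HasEnoughRootsOfUnity.of_dvd H hk
  obtain ⟨φ, hφ⟩ := CommGroup.exists_apply_ne_one_of_hasEnoughRootsOfUnity G H hg
  exact ⟨H.subtype.comp ((Units.coeHom H).comp φ), fun x => (φ x : H).2,
    fun h => hφ (Units.ext (Subtype.ext h))⟩

theorem iSupIndep_of_proj {R M ι : Type*} [Ring R] [AddCommGroup M] [Module R M]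
    {N : ι → Submodule R M} (π : ι → M →+ M) (hself : ∀ i, ∀ x ∈ N i, π i x = x)
    (hother : ∀ i j, i ≠ j → ∀ x ∈ N j, π i x = 0) : iSupIndep N := by
  classical
  refine (iSupIndep_iff_finsetSum_eq_zero_imp_eq_zero N).mpr fun s v hv hsum i hi => ?_
  have h := congrArg (π i) hsum
  rwa [map_sum, Finset.sum_eq_single_of_mem i hi fun j hj hji => hother i j hji.symm _ (hv j hj),
    hself i _ (hv i hi), map_zero] at h

section Characters

variable {G : Type*} {S : Type*} [CommRing S]

theorem sum_units_apply_eq_zero_of_isUnit_one_sub [Group G] [Fintype G] (χ : G →* Sˣ) {g₀ : G}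
    (h : IsUnit (1 - (χ g₀ : S))) : ∑ g, (χ g : S) = 0 := by
  have hshift : ∑ g, (χ g : S) = (χ g₀ : S) * ∑ g, (χ g : S) :=
    calc ∑ g, (χ g : S)
        = ∑ g, (χ (g₀ * g) : S) := (Equiv.sum_comp (Equiv.mulLeft g₀) _).symm
      _ = (χ g₀ : S) * ∑ g, (χ g : S) := by simp [Finset.mul_sum]
  exact h.mul_right_eq_zero.mp (by rw [sub_mul, one_mul, ← hshift, sub_self])

-- The paper's `Ĝ = Hom(G, ⟨ω⟩)`.
variable (G) in
def powersDual [Group G] (ω : S) : Subgroup (G →* Sˣ) where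
  carrier := {χ | ∀ g, (χ g : S) ∈ Submonoid.powers ω}
  mul_mem' {χ ψ} hχ hψ g := by simpa using Submonoid.mul_mem _ (hχ g) (hψ g)
  one_mem' g := by simp
  inv_mem' {χ} hχ g := by simpa using hχ g⁻¹

variable {ω : S}

theorem finite_powersDual [Group G] [Finite G] {n : ℕ} (hn : 0 < n) (hω : ω ^ n = 1) :
    Finite (powersDual G ω) := by
  have : Finite (Submonoid.powers ω) :=
    (isOfFinOrder_iff_pow_eq_one.mpr ⟨n, hn, hω⟩).finite_powers.to_subtype
  refine Finite.of_injective
    (fun χ : powersDual G ω => fun g => (⟨χ.1 g, χ.2 g⟩ : Submonoid.powers ω)) ?_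
  intro χ ψ h
  ext g
  exact congrArg Subtype.val (congrFun h g)

variable [Fintype G]

theorem sum_apply_eq_zero_of_mem_powersDual [Group G] (hω : ω ^ Fintype.card G = 1)
    (hkum : ∀ i : ℕ, 1 ≤ i → i ≤ Fintype.card G - 1 → IsUnit (1 - ω ^ i)) {χ : G →* Sˣ}
    (hχ : χ ∈ powersDual G ω) (h1 : χ ≠ 1) : ∑ g, (χ g : S) = 0 := by
  obtain ⟨g₀, hg₀⟩ := DFunLike.ne_iff.mp h1
  exact sum_units_apply_eq_zero_of_isUnit_one_sub χ
    (isUnit_one_sub_of_mem_powers Fintype.card_pos hω hkum (hχ g₀) (by simpa using hg₀))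

theorem exists_mem_powersDual_apply_ne_one [CommGroup G] [Nontrivial S]
    (hω : ω ^ Fintype.card G = 1)
    (hkum : ∀ i : ℕ, 1 ≤ i → i ≤ Fintype.card G - 1 → IsUnit (1 - ω ^ i)) {g : G}
    (hg : g ≠ 1) : ∃ χ ∈ powersDual G ω, χ g ≠ 1 := by
  have hn : 0 < Fintype.card G := Fintype.card_pos
  have : NeZero (Fintype.card G) := ⟨hn.ne'⟩
  have hprim := isPrimitiveRoot_of_isUnit_one_sub_pow hn hω hkum
  set u := (hprim.isUnit hn.ne').unit
  have hu : IsPrimitiveRoot u (Fintype.card G) := IsPrimitiveRoot.coe_units_iff.mp hprim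
  obtain ⟨χ, hχ, hχg⟩ :=
    exists_monoidHom_mem_zpowers_apply_ne_one hu Group.exponent_dvd_card hg
  refine ⟨χ, fun x => ?_, hχg⟩
  obtain ⟨k, hk⟩ := (hu.isOfFinOrder hn.ne').mem_powers_iff_mem_zpowers.mpr (hχ x)
  exact ⟨k, by rw [← hk, Units.val_pow_eq_pow_val, IsUnit.unit_spec]⟩

-- Summing `∑_g χ g = [χ = 1] |G|` over `χ` and swapping the sums gives the value at `g = 1`.
theorem sum_powersDual_apply [CommGroup G] [DecidableEq G] [Fintype (powersDual G ω)]
    (hω : ω ^ Fintype.card G = 1)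
    (hkum : ∀ i : ℕ, 1 ≤ i → i ≤ Fintype.card G - 1 → IsUnit (1 - ω ^ i)) (g : G) :
    ∑ χ : powersDual G ω, (χ.1 g : S) = if g = 1 then (Fintype.card G : S) else 0 := by
  rcases subsingleton_or_nontrivial S with hS | hS
  · exact Subsingleton.elim _ _
  have hne : ∀ x ≠ (1 : G), ∑ χ : powersDual G ω, (χ.1 x : S) = 0 := fun x hx => by
    obtain ⟨χ₀, hχ₀, hχ₀x⟩ := exists_mem_powersDual_apply_ne_one hω hkum hx
    exact sum_units_apply_eq_zero_of_isUnit_one_sub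
      ((MonoidHom.eval x).comp (powersDual G ω).subtype) (g₀ := ⟨χ₀, hχ₀⟩)
      (isUnit_one_sub_of_mem_powers Fintype.card_pos hω hkum (hχ₀ x) (by simpa using hχ₀x))
  split_ifs with hg
  · subst hg
    calc ∑ χ : powersDual G ω, (χ.1 1 : S)
        = ∑ x, ∑ χ : powersDual G ω, (χ.1 x : S) := (Fintype.sum_eq_single 1 hne).symm
      _ = ∑ χ : powersDual G ω, ∑ x, (χ.1 x : S) := Finset.sum_comm
      _ = ∑ x, ((1 : powersDual G ω).1 x : S) := Fintype.sum_eq_single 1 fun χ h =>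
          sum_apply_eq_zero_of_mem_powersDual hω hkum χ.2 fun h' => h (Subtype.ext h')
      _ = Fintype.card G := by simp
  · exact hne g hg

end Characters

namespace PartialAction

variable {G : Type*} [Group G] {S : Type*} [CommRing S] {P : PartialAction G S}

theorem act_apply_one (g : G) : P.act g 1 = P.e g := by
  rw [← P.act_restrict, one_mul, P.act_e]

theorem act_act (h g : G) (a : S) : P.act h (P.act g a) = P.act (h * g) a * P.e h := by
  have hcomp := P.act_comp h g a
  rw [P.act_restrict, P.act_mul] at hcomp
  have he : P.act (h * g) (P.e g⁻¹) = P.e (h * g) * P.e h := by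
    rw [← P.act_restrict, mul_comm, P.act_inter, mul_inv_cancel_right]
  rw [hcomp, he]
  calc P.act (h * g) a * (P.e (h * g) * P.e h) * P.e h
      = (P.act (h * g) a * P.e (h * g)) * (P.e h * P.e h) := by ring
    _ = P.act (h * g) a * P.e h := by rw [P.act_mem, P.e_idem]

variable (P) in
def actAddHom (g : G) : S →+ S :=
  AddMonoidHom.mk' (P.act g) (P.act_add g)

theorem act_sum {ι : Type*} (g : G) (s : Finset ι) (f : ι → S) :
    P.act g (∑ i ∈ s, f i) = ∑ i ∈ s, P.act g (f i) :=
  map_sum (P.actAddHom g) f s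

theorem mem_invariants_iff {a : S} : a ∈ P.invariants ↔ ∀ g, P.act g a = a * P.e g := by
  change (∀ g, P.act g (a * P.e g⁻¹) = a * P.e g) ↔ _
  simp only [P.act_restrict]

theorem natCast_mem_invariants (n : ℕ) : (n : S) ∈ P.invariants := fun g => by
  have h : P.act g (n • P.e g⁻¹) = n • P.act g (P.e g⁻¹) := map_nsmul (P.actAddHom g) n _
  rwa [nsmul_eq_mul, nsmul_eq_mul, P.act_e] at h

theorem mem_invariants_of_mul_eq_one {a b : S} (hab : a * b = 1) (ha : a ∈ P.invariants) :
    b ∈ P.invariants := by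
  rw [mem_invariants_iff] at ha ⊢
  intro g
  have hg : P.e g = a * P.e g * P.act g b := by rw [← ha, ← P.act_mul, hab, act_apply_one]
  calc P.act g b = P.e g * P.act g b := by rw [mul_comm, P.act_mem]
    _ = (a * b) * (P.e g * P.act g b) := by rw [hab, one_mul]
    _ = b * (a * P.e g * P.act g b) := by ring
    _ = b * P.e g := by rw [← hg]

theorem inverse_mem_invariants {a : S} (ha : a ∈ P.invariants) :
    Ring.inverse a ∈ P.invariants := by
  by_cases hu : IsUnit a
  · exact mem_invariants_of_mul_eq_one (Ring.mul_inverse_cancel a hu) ha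
  · rw [Ring.inverse_non_unit a hu]
    intro g
    simp [act_zero]

variable {R : Subring S} {hR : ∀ r ∈ R, ∀ g : G, P.act g (r * P.e g⁻¹) = r * P.e g}

theorem mem_Qmod_iff {f : G → S} {a : S} :
    a ∈ Qmod P R hR f ↔ ∀ g, P.act g a = f g * a := by
  change (∀ g, P.act g (a * P.e g⁻¹) = f g * a) ↔ _
  simp only [P.act_restrict]

theorem mul_mem_Qmod {f : G → S} {r a : S} (hr : r ∈ P.invariants) (ha : a ∈ Qmod P R hR f) :
    r * a ∈ Qmod P R hR f := by
  rw [mem_Qmod_iff] at ha ⊢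
  intro g
  have hfa : f g * a * P.e g = f g * a := by rw [← ha, P.act_mem]
  rw [P.act_mul, mem_invariants_iff.mp hr, ha]
  linear_combination r * hfa

variable [Fintype G]

variable (P) in
def twistedTrace (χ : G →* Sˣ) : S →+ S where
  toFun a := ∑ g, (χ g⁻¹ : S) * P.act g a
  map_zero' := by simp [act_zero]
  map_add' a b := by simp only [P.act_add, mul_add, Finset.sum_add_distrib]

theorem twistedTrace_apply (χ : G →* Sˣ) (a : S) :
    P.twistedTrace χ a = ∑ g, (χ g⁻¹ : S) * P.act g a :=
  rfl

theorem act_twistedTrace {χ : G →* Sˣ} (hχ : ∀ g, (χ g : S) ∈ P.invariants) (h : G)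
    (a : S) : P.act h (P.twistedTrace χ a) = (χ h : S) * P.e h * P.twistedTrace χ a := by
  rw [twistedTrace_apply, act_sum, Finset.mul_sum]
  calc ∑ g, P.act h ((χ g⁻¹ : S) * P.act g a)
      = ∑ g, P.e h * ((χ ((h * g)⁻¹ * h) : S) * P.act (h * g) a) := by
        refine Finset.sum_congr rfl fun g _ => ?_
        rw [P.act_mul, mem_invariants_iff.mp (hχ _), act_act, mul_inv_rev, inv_mul_cancel_right]
        linear_combination (χ g⁻¹ : S) * P.act (h * g) a * P.e_idem h
    _ = ∑ g, P.e h * ((χ (g⁻¹ * h) : S) * P.act g a) :=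
        Equiv.sum_comp (Equiv.mulLeft h) fun g => P.e h * ((χ (g⁻¹ * h) : S) * P.act g a)
    _ = ∑ g, (χ h : S) * P.e h * ((χ g⁻¹ : S) * P.act g a) := by
        simp only [map_mul, Units.val_mul]
        exact Finset.sum_congr rfl fun g _ => by ring

theorem twistedTrace_mem_Qmod {χ : G →* Sˣ} (hχ : ∀ g, (χ g : S) ∈ P.invariants) (a : S) :
    P.twistedTrace χ a ∈ Qmod P R hR (fun g => (χ g : S) * P.e g) :=
  mem_Qmod_iff.mpr fun h => act_twistedTrace hχ h a

theorem twistedTrace_of_mem_Qmod (hglob : ∀ g, P.e g = 1) (χ : G →* Sˣ) {ψ : G →* Sˣ}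
    {b : S} (hb : b ∈ Qmod P R hR (fun g => (ψ g : S) * P.e g)) :
    P.twistedTrace χ b = (∑ g, ((χ⁻¹ * ψ) g : S)) * b := by
  rw [twistedTrace_apply, Finset.sum_mul]
  refine Finset.sum_congr rfl fun g _ => ?_
  rw [mem_Qmod_iff.mp hb, hglob, mul_one, MonoidHom.mul_apply, MonoidHom.inv_apply, ← map_inv,
    Units.val_mul, mul_assoc]

theorem sum_mul_twistedTrace [DecidableEq G] {ι : Type*} [Fintype ι] {χ : ι → G →* Sˣ}
    {c : S} (horth : ∀ g, ∑ i, (χ i g : S) = if g = 1 then c else 0) (h : G) (a : S) :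
    ∑ i, (χ i h : S) * P.twistedTrace (χ i) a = c * P.act h a := by
  simp only [twistedTrace_apply, Finset.mul_sum]
  rw [Finset.sum_comm]
  calc ∑ g, ∑ i, (χ i h : S) * ((χ i g⁻¹ : S) * P.act g a)
      = ∑ g, (∑ i, (χ i (h * g⁻¹) : S)) * P.act g a := by
        simp only [map_mul, Units.val_mul, Finset.sum_mul, mul_assoc]
    _ = c * P.act h a := by
        simp only [horth, mul_inv_eq_one, ite_mul, zero_mul, Finset.sum_ite_eq, Finset.mem_univ,
          if_true]

theorem sum_inverse_mul_twistedTrace [DecidableEq G] {ι : Type*} [Fintype ι]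
    {χ : ι → G →* Sˣ} {c : S} (horth : ∀ g, ∑ i, (χ i g : S) = if g = 1 then c else 0)
    (hc : IsUnit c) (a : S) :
    ∑ i, Ring.inverse c * P.twistedTrace (χ i) a = a := by
  have h := sum_mul_twistedTrace (P := P) horth 1 a
  simp only [map_one, Units.val_one, one_mul, P.act_one] at h
  rw [← Finset.mul_sum, h, ← mul_assoc, Ring.inverse_mul_cancel c hc, one_mul]

variable {X : Subgroup (G →* Sˣ)}

theorem iSupIndep_Qmod_of_forall_e_eq_one (hglob : ∀ g, P.e g = 1)
    (horth : ∀ χ ∈ X, χ ≠ 1 → ∑ g, (χ g : S) = 0) (hn : IsUnit (Fintype.card G : S)) :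
    iSupIndep fun χ : X => Qmod P R hR (fun g => (χ.1 g : S) * P.e g) := by
  refine iSupIndep_of_proj
    (fun χ : X => (AddMonoidHom.mulLeft (Ring.inverse (Fintype.card G : S))).comp
      (P.twistedTrace χ)) (fun χ b hb => ?_) (fun χ ψ hχψ b hb => ?_)
  · simp [twistedTrace_of_mem_Qmod hglob _ hb, Ring.inverse_mul_cancel_left _ _ hn]
  · rw [AddMonoidHom.comp_apply, twistedTrace_of_mem_Qmod hglob _ hb,
      horth _ (X.mul_mem (X.inv_mem χ.2) ψ.2)
        (fun h => hχψ (Subtype.ext (inv_mul_eq_one.mp h))), zero_mul, map_zero]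

variable [DecidableEq G] [Fintype X]

theorem iSup_Qmod_eq_top (hX : ∀ χ ∈ X, ∀ g, (χ g : S) ∈ P.invariants)
    (horth : ∀ g, ∑ χ : X, (χ.1 g : S) = if g = 1 then (Fintype.card G : S) else 0)
    (hn : IsUnit (Fintype.card G : S)) :
    ⨆ χ : X, Qmod P R hR (fun g => (χ.1 g : S) * P.e g) = ⊤ := by
  refine Submodule.eq_top_iff'.mpr fun a => ?_
  rw [← sum_inverse_mul_twistedTrace (P := P) horth hn a]
  exact Submodule.sum_mem _ fun χ _ => Submodule.mem_iSup_of_mem χ <|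
    mul_mem_Qmod (inverse_mem_invariants (natCast_mem_invariants _))
      (twistedTrace_mem_Qmod (hX χ χ.2) a)

theorem forall_e_eq_one_of_iSupIndep_Qmod (hX : ∀ χ ∈ X, ∀ g, (χ g : S) ∈ P.invariants)
    (horth : ∀ g, ∑ χ : X, (χ.1 g : S) = if g = 1 then (Fintype.card G : S) else 0)
    (hn : IsUnit (Fintype.card G : S))
    (hind : iSupIndep fun χ : X => Qmod P R hR (fun g => (χ.1 g : S) * P.e g)) (h : G) :
    P.e h = 1 := by
  classical
  set n : S := (Fintype.card G : S)
  have hcomp : ∀ χ : X, Ring.inverse n * P.twistedTrace χ 1 = if χ = 1 then 1 else 0 := by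
    refine fun χ => (iSupIndep_iff_finsetSum_eq_imp_eq _).mp hind Finset.univ
      (fun χ => Ring.inverse n * P.twistedTrace χ 1) (fun χ => if χ = 1 then 1 else 0)
      (fun χ _ => ⟨?_, ?_⟩) ?_ χ (Finset.mem_univ χ)
    · exact mul_mem_Qmod (inverse_mem_invariants (natCast_mem_invariants _))
        (twistedTrace_mem_Qmod (hX χ χ.2) 1)
    · split_ifs with hχ
      · exact mem_Qmod_iff.mpr fun g => by simp [hχ, act_apply_one]
      · exact Submodule.zero_mem _
    · simp [sum_inverse_mul_twistedTrace (P := P) horth hn]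
  have htrace : ∀ χ : X, P.twistedTrace χ 1 = n * if χ = 1 then 1 else 0 := fun χ => by
    rw [← hcomp, Ring.mul_inverse_cancel_left _ _ hn]
  refine hn.mul_left_cancel ?_
  calc n * P.e h = ∑ χ : X, (χ.1 h : S) * P.twistedTrace χ 1 := by
        rw [sum_mul_twistedTrace (P := P) horth, act_apply_one]
    _ = n * 1 := by simp [htrace]

end PartialAction

theorem sum_Q_chi_eq_top_general {G : Type*} [CommGroup G] [Fintype G] [DecidableEq G]
    {S : Type*} [CommRing S] (P : PartialAction G S) (R : Subring S)
    (hR : ∀ r ∈ R, ∀ g : G, P.act g (r * P.e g⁻¹) = r * P.e g)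
    (ω : S) (hωR : ω ∈ R) (hω : ω ^ Fintype.card G = 1)
    (hkum : ∀ i : ℕ, 1 ≤ i → i ≤ Fintype.card G - 1 → IsUnit (1 - ω ^ i)) :
    (⨆ χ : {χ : G →* Sˣ // ∀ g : G, ((χ g : S)) ∈ Submonoid.powers ω},
        PartialAction.Qmod P R hR (fun g => (χ.1 g : S) * P.e g)) = ⊤ ∧
    (iSupIndep
        (fun χ : {χ : G →* Sˣ // ∀ g : G, ((χ g : S)) ∈ Submonoid.powers ω} =>
          PartialAction.Qmod P R hR (fun g => (χ.1 g : S) * P.e g)) ↔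
      ∀ g : G, P.e g = 1) := by
  have hn : 0 < Fintype.card G := Fintype.card_pos
  have := finite_powersDual (G := G) hn hω
  have := Fintype.ofFinite (powersDual G ω)
  have hX : ∀ χ ∈ powersDual G ω, ∀ g, (χ g : S) ∈ P.invariants := fun χ hχ g => by
    obtain ⟨k, hk⟩ := hχ g
    rw [← hk]
    exact hR _ (pow_mem hωR k)
  have horth := sum_powersDual_apply hω hkum
  have hnu := isUnit_natCast_of_isUnit_one_sub_pow hn hω hkum
  exact ⟨PartialAction.iSup_Qmod_eq_top hX horth hnu,
    PartialAction.forall_e_eq_one_of_iSupIndep_Qmod hX horth hnu,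
    fun hglob => PartialAction.iSupIndep_Qmod_of_forall_e_eq_one hglob
      (fun _ hχ => sum_apply_eq_zero_of_mem_powersDual hω hkum hχ) hnu⟩

/-- for a partial `n`-kummerian extension, `S = ∑_{χ ∈ Ĝ} Q_{χ_p}`, and the
sum is direct iff the extension is a (global) Galois extension. -/
theorem sum_Q_chi_eq_top {G : Type*} [CommGroup G] [Fintype G] [DecidableEq G]
    {S : Type*} [CommRing S] (P : PartialAction G S) (R : Subring S)
    (hR : ∀ r ∈ R, ∀ g : G, P.act g (r * P.e g⁻¹) = r * P.e g)
    (hGal : P.IsPartialGalois R)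
    (ω : S) (hωR : ω ∈ R) (hωu : IsUnit ω) (hω : ω ^ Fintype.card G = 1)
    (hkum : ∀ i : ℕ, 1 ≤ i → i ≤ Fintype.card G - 1 → IsUnit (1 - ω ^ i)) :
    (⨆ χ : {χ : G →* Sˣ // ∀ g : G, ((χ g : S)) ∈ Submonoid.powers ω},
        PartialAction.Qmod P R hR (fun g => (χ.1 g : S) * P.e g)) = ⊤ ∧
    (iSupIndep
        (fun χ : {χ : G →* Sˣ // ∀ g : G, ((χ g : S)) ∈ Submonoid.powers ω} =>
          PartialAction.Qmod P R hR (fun g => (χ.1 g : S) * P.e g)) ↔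
      ∀ g : G, P.e g = 1) :=
  sum_Q_chi_eq_top_general P R hR ω hωR hω hkum
end

section
/- Let S ⊇ R be a partial Galois extension of a finite group G with unital partial action α, and let H be a subgroup of G acting globally on S by restriction (i.e. S_h = S for all h ∈ H) with action β. Then R = S^H if and only if α is the extension by zero of β, i.e. S_g = {0} for all g ∈ G \ H. -/
/-- if `H ≤ G` acts globally on `S` (i.e. `S_h = S` for `h ∈ H`), then
`R = S^H` iff `α` is the extension by zero of the `H`-action (`S_g = 0` for `g ∉ H`). -/
theorem invariants_eq_iff_extension_by_zero {G : Type*} [Group G] [Fintype G] [DecidableEq G]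
    {S : Type*} [CommRing S] (P : PartialAction G S) (R : Subring S)
    (hGal : P.IsPartialGalois R)
    (H : Subgroup G) (hglob : ∀ h ∈ H, P.e h = 1) :
    ((R : Set S) = {a : S | ∀ h ∈ H, P.act h a = a}) ↔
      ∀ g : G, g ∉ H → P.e g = 0 := by
  classical
  obtain ⟨hR, m, x, y, hcoord⟩ := hGal
  constructor
  · -- forward: R = S^H implies e g = 0 off H
    intro hset g hg
    -- act k as additive map over sums
    have hact_sum : ∀ (k : G) (f : H → S),
        P.act k (∑ h : H, f h) = ∑ h : H, P.act k (f h) := fun k f =>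
      map_sum (AddMonoidHom.mk' (P.act k) (P.act_add k)) _ _
    have hcomp : ∀ h' ∈ H, ∀ h ∈ H, ∀ s : S,
        P.act h' (P.act h s) = P.act (h' * h) s := by
      intro h' hh' h hh s
      have e1 : P.e h'⁻¹ = 1 := hglob _ (inv_mem hh')
      have e2 : P.e h⁻¹ = 1 := hglob _ (inv_mem hh)
      have e3 : P.e h' = 1 := hglob _ hh'
      have := P.act_comp h' h s
      rw [e1, e2, e3, mul_one, mul_one, mul_one] at this
      exact this
    set t : S → S := fun s => ∑ h : H, P.act (h : G) s with ht
    have hTinv : ∀ s : S, t s ∈ P.invariants := by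
      intro s
      rw [← hR, hset]
      intro h' hh'
      rw [ht]
      simp only
      rw [hact_sum]
      rw [show (∑ h : H, P.act h' (P.act (h : G) s))
          = ∑ h : H, P.act ((h' * (h : G))) s from
        Finset.sum_congr rfl (fun h _ => hcomp h' hh' h h.2 s)]
      exact Fintype.sum_equiv (Equiv.mulLeft (⟨h', hh'⟩ : H))
        (fun h => P.act ((h' * (h : G))) s) (fun h => P.act (h : G) s)
        (fun h => by simp)
    have key : ∀ i, P.act g (t (y i) * P.e g⁻¹) = t (y i) * P.e g :=
      fun i => hTinv (y i) g
    -- left side is zero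
    have hL : ∀ i : Fin m, P.act g (t (y i) * P.e g⁻¹)
        = ∑ h : H, P.act (g * h) (y i) * P.e g := by
      intro i
      rw [ht]
      simp only
      rw [Finset.sum_mul, hact_sum]
      refine Finset.sum_congr rfl (fun h _ => ?_)
      have e2 : P.e (h : G)⁻¹ = 1 := hglob _ (inv_mem h.2)
      have := P.act_comp g (h : G) (y i)
      rw [e2, mul_one] at this
      exact this
    have hzero : (∑ i : Fin m, x i * P.act g (t (y i) * P.e g⁻¹)) = 0 := by
      have : (∑ i : Fin m, x i * P.act g (t (y i) * P.e g⁻¹))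
          = ∑ h : H, (∑ i : Fin m, x i * P.act (g * h) (y i * P.e ((g:G) * h)⁻¹)) * P.e g := by
        rw [Finset.sum_congr rfl (fun i _ => by rw [hL i, Finset.mul_sum])]
        rw [Finset.sum_comm]
        refine Finset.sum_congr rfl (fun h _ => ?_)
        rw [Finset.sum_mul]
        refine Finset.sum_congr rfl (fun i _ => ?_)
        rw [P.act_restrict]
        ring
      rw [this]
      refine Finset.sum_eq_zero (fun h _ => ?_)
      rw [hcoord (g * h)]
      have : (g : G) * h ≠ 1 := by
        intro hgh
        have : g = (h : G)⁻¹ := eq_inv_of_mul_eq_one_left hgh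
        exact hg (this ▸ inv_mem h.2)
      rw [if_neg this, zero_mul]
    -- right side is e g
    have hRHS : (∑ i : Fin m, x i * (t (y i) * P.e g)) = P.e g := by
      have h1 : (∑ i : Fin m, x i * (t (y i) * P.e g))
          = ∑ h : H, (∑ i : Fin m, x i * P.act (h : G) (y i * P.e (h : G)⁻¹)) * P.e g := by
        have hts : ∀ i : Fin m, x i * (t (y i) * P.e g)
            = ∑ h : H, x i * (P.act (h : G) (y i) * P.e g) := by
          intro i
          rw [show t (y i) = ∑ h : H, P.act (h : G) (y i) from rfl,
            Finset.sum_mul, Finset.mul_sum]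
        rw [Finset.sum_congr rfl (fun i _ => hts i)]
        rw [Finset.sum_comm]
        refine Finset.sum_congr rfl (fun h _ => ?_)
        rw [Finset.sum_mul]
        refine Finset.sum_congr rfl (fun i _ => ?_)
        rw [P.act_restrict]
        ring
      rw [h1]
      have h2 : ∀ h : H, (∑ i : Fin m, x i * P.act (h : G) (y i * P.e (h : G)⁻¹)) * P.e g
          = (if h = (1 : H) then (1:S) else 0) * P.e g := by
        intro h
        rw [hcoord (h : G)]
        congr 1
        have hiff : ((h : G) = 1) ↔ (h = 1) :=
          ⟨fun hh => Subtype.ext hh, fun hh => by rw [hh]; rfl⟩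
        rw [if_congr hiff rfl rfl]
      rw [Finset.sum_congr rfl (fun h _ => h2 h)]
      rw [← Finset.sum_mul, Finset.sum_ite_eq' Finset.univ (1 : H) (fun _ => (1:S))]
      simp
    have hEq : (∑ i : Fin m, x i * P.act g (t (y i) * P.e g⁻¹))
        = ∑ i : Fin m, x i * (t (y i) * P.e g) :=
      Finset.sum_congr rfl (fun i _ => by rw [key i])
    rw [← hRHS, ← hEq, hzero]
  · -- backward: extension by zero implies R = S^H
    intro hz
    rw [hR]
    ext a
    simp only [PartialAction.invariants, Set.mem_setOf_eq]
    constructor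
    · intro ha h hh
      have := ha h
      simp only [hglob h hh, hglob h⁻¹ (inv_mem hh), mul_one] at this
      exact this
    · intro ha g
      by_cases hgH : g ∈ H
      · simp only [hglob g hgH, hglob g⁻¹ (inv_mem hgH), mul_one]
        exact ha g hgH
      · have hginv : g⁻¹ ∉ H := fun h => hgH (by simpa using inv_mem h)
        simp only [hz g hgH, hz g⁻¹ hginv, mul_zero]
        exact PartialAction.act_zero g
end
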